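/- arXiv:1312.3008 — 4 statements merged into one kernel-verified Lean document; each statement's English description precedes it below -/
import Mathlib

section
/- The total number of balls is conserved under the UD-pTL: if Σ_{i=1}^{g+1} J_i < Σ_{i=1}^{g+1} W_i, then Σ_{i=1}^{g+1} J̄_i = Σ_{i=1}^{g+1} J_i; i.e., C_0 := Σ_{i=1}^{g+1} J_i is a conserved quantity of the UD-pTL. -/
open Fin.NatCast in
/-- `X_i = max_{0 ≤ k ≤ g} Σ_{l=1}^{k} (J_{i-l} - W_{i-l})`, indices cyclic mod `g+1`. -/
noncomputable def udX (g : ℕ) (J W : Fin (g + 1) → ℝ) (i : Fin (g + 1)) : ℝ :=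
  (Finset.range (g + 1)).sup' ⟨0, Finset.mem_range.mpr (Nat.succ_pos g)⟩
    (fun k => ∑ l ∈ Finset.Icc 1 k, (J (i - (l : Fin (g + 1))) - W (i - (l : Fin (g + 1)))))

/-- `J̄_i = min(W_i, X_i + J_i)`. -/
noncomputable def udJbar (g : ℕ) (J W : Fin (g + 1) → ℝ) (i : Fin (g + 1)) : ℝ :=
  min (W i) (udX g J W i + J i)

/-- `W̄_i = J_{i+1} + W_i - J̄_i`. -/
noncomputable def udWbar (g : ℕ) (J W : Fin (g + 1) → ℝ) (i : Fin (g + 1)) : ℝ :=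
  J (i + 1) + W i - udJbar g J W i

/-!
Write `d = J - W` and `S_i(k) = Σ_{l=1}^{k} d_{i-l}`, so that `X_i = max_{k ≤ g} S_i(k)`.
Since `S_{i+1}(k+1) = d_i + S_i(k)`, the maximum of `S_{i+1}(k)` over `k ≤ g + 1` is
`max(0, X_i + d_i)`; it is also `X_{i+1}`, because the one extra term `S_{i+1}(g+1)` is the full
period `Σ d < 0 ≤ X_{i+1}`. Hence `X_{i+1} = max(0, X_i + d_i)` (a Lindley recursion), which turns
`J̄_i = min(W_i, X_i + J_i)` into `J_i + X_i - X_{i+1}`, and this telescopes around the cycle.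
-/

open Finset

section CyclicBackSum

open Fin.NatCast Fin.CommRing

variable {n : ℕ} {M : Type*} [AddCommMonoid M]

def cyclicBackSum (d : Fin (n + 1) → M) (i : Fin (n + 1)) (k : ℕ) : M :=
  ∑ l ∈ Icc 1 k, d (i - l)

theorem cyclicBackSum_eq_sum_range (d : Fin (n + 1) → M) (i : Fin (n + 1)) (k : ℕ) :
    cyclicBackSum d i k = ∑ l ∈ range k, d (i - (l + 1 : ℕ)) := by
  rw [cyclicBackSum, ← Ico_add_one_right_eq_Icc, sum_Ico_eq_sum_range, add_tsub_cancel_right]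
  simp only [add_comm 1]

@[simp]
theorem cyclicBackSum_zero (d : Fin (n + 1) → M) (i : Fin (n + 1)) : cyclicBackSum d i 0 = 0 := by
  simp [cyclicBackSum]

theorem cyclicBackSum_add_one (d : Fin (n + 1) → M) (i : Fin (n + 1)) (k : ℕ) :
    cyclicBackSum d (i + 1) (k + 1) = d i + cyclicBackSum d i k := by
  simp only [cyclicBackSum_eq_sum_range, sum_range_succ', Nat.cast_add, Nat.cast_one,
    Nat.cast_zero]
  rw [add_comm]
  congr 1
  · ring_nf
  · exact sum_congr rfl fun l _ => by ring_nf

theorem cyclicBackSum_period (d : Fin (n + 1) → M) (i : Fin (n + 1)) :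
    cyclicBackSum d i (n + 1) = ∑ j, d j := by
  rw [cyclicBackSum_eq_sum_range, ← Fin.sum_univ_eq_sum_range (fun l => d (i - (l + 1 : ℕ)))]
  simp only [Nat.cast_add, Nat.cast_one, Fin.cast_val_eq_self]
  exact Equiv.sum_comp ((Equiv.addRight 1).trans (Equiv.subLeft i)) d

end CyclicBackSum

theorem udX_eq_partialSups (g : ℕ) (J W : Fin (g + 1) → ℝ) (i : Fin (g + 1)) :
    udX g J W i = partialSups (cyclicBackSum (J - W) i) g := by
  rw [partialSups_eq_sup'_range]
  rfl

theorem udX_add_one (g : ℕ) (J W : Fin (g + 1) → ℝ) (h : ∑ i, J i < ∑ i, W i)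
    (i : Fin (g + 1)) :
    udX g J W (i + 1) = max 0 (udX g J W i + (J i - W i)) := by
  set S := cyclicBackSum (J - W)
  have hperiod : S (i + 1) (g + 1) < 0 := by
    simp only [S, cyclicBackSum_period, Pi.sub_apply, sum_sub_distrib]
    linarith
  have hnonneg : 0 ≤ udX g J W (i + 1) := by
    rw [udX_eq_partialSups, ← cyclicBackSum_zero (J - W) (i + 1)]
    exact le_partialSups_of_le _ (Nat.zero_le g)
  calc udX g J W (i + 1)
      = partialSups (S (i + 1)) (g + 1) := by
        rw [partialSups_add_one, ← udX_eq_partialSups, sup_eq_left.2 (hperiod.le.trans hnonneg)]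
    _ = S (i + 1) 0 ⊔ partialSups (fun k => S (i + 1) (k + 1)) g := partialSups_add_one' _ _
    _ = 0 ⊔ partialSups (fun k => (J i - W i) + S i k) g := by
        simp only [cyclicBackSum_zero, cyclicBackSum_add_one, S, Pi.sub_apply]
    _ = max 0 ((J i - W i) + udX g J W i) := by
        rw [udX_eq_partialSups]
        exact congrArg (max 0) (map_partialSups (OrderIso.addLeft (J i - W i)) (S i) g)
    _ = max 0 (udX g J W i + (J i - W i)) := by rw [add_comm]

theorem udJbar_eq_add_udX_sub_udX (g : ℕ) (J W : Fin (g + 1) → ℝ) (h : ∑ i, J i < ∑ i, W i)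
    (i : Fin (g + 1)) :
    udJbar g J W i = J i + udX g J W i - udX g J W (i + 1) := by
  rw [udJbar, udX_add_one g J W h, ← min_sub_sub_left, min_comm]
  congr 1 <;> ring

theorem udpToda_sum_J_conserved_general (g : ℕ) (J W : Fin (g + 1) → ℝ)
    (h : ∑ i, J i < ∑ i, W i) :
    ∑ i, udJbar g J W i = ∑ i, J i := by
  have hshift : ∑ i, udX g J W (i + 1) = ∑ i, udX g J W i :=
    Equiv.sum_comp (Equiv.addRight 1) (udX g J W)
  simp only [udJbar_eq_add_udX_sub_udX g J W h, sum_sub_distrib, sum_add_distrib, hshift,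
    add_sub_cancel_right]

/-- The total number of balls `C_0 = Σ J_i` is conserved under the UD-pTL. -/
theorem udpToda_sum_J_conserved (g : ℕ) (hg : 1 ≤ g) (J W : Fin (g + 1) → ℝ)
    (h : ∑ i, J i < ∑ i, W i) :
    ∑ i, udJbar g J W i = ∑ i, J i :=
  udpToda_sum_J_conserved_general g J W h
end

section
/- The quantity C_g := min_{1≤i≤g+1} min(J_i, W_i) is a conserved quantity of the UD-pTL: if Σ_{i=1}^{g+1} J_i < Σ_{i=1}^{g+1} W_i, then min_{1≤i≤g+1} min(J̄_i, W̄_i) = min_{1≤i≤g+1} min(J_i, W_i). -/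
open Fin.NatCast

namespace UDToda

variable {g : ℕ} (J W : Fin (g + 1) → ℝ)

def partialSum (i : Fin (g + 1)) (k : ℕ) : ℝ :=
  ∑ l ∈ Finset.Icc 1 k, (J (i - (l : Fin (g + 1))) - W (i - (l : Fin (g + 1))))

lemma partialSum_zero (i : Fin (g + 1)) : partialSum J W i 0 = 0 := by
  simp [partialSum]

lemma partialSum_succ (i : Fin (g + 1)) (k : ℕ) :
    partialSum J W i (k + 1) = (J (i - 1) - W (i - 1)) + partialSum J W (i - 1) k := by
  induction k with
  | zero => simp [partialSum]
  | succ k ih =>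
    have hcast : i - ((k + 1 + 1 : ℕ) : Fin (g + 1)) = i - 1 - ((k + 1 : ℕ) : Fin (g + 1)) := by
      push_cast; abel
    unfold partialSum at ih ⊢
    rw [Finset.sum_Icc_succ_top (by omega : 1 ≤ k + 1 + 1), ih,
      Finset.sum_Icc_succ_top (by omega : 1 ≤ k + 1), hcast]
    ring

lemma udX_eq_sup' (i : Fin (g + 1)) :
    udX g J W i = (Finset.range (g + 1)).sup' ⟨0, Finset.mem_range.mpr g.succ_pos⟩
      (partialSum J W i) := rfl

lemma partialSum_le_udX (i : Fin (g + 1)) {k : ℕ} (hk : k ≤ g) :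
    partialSum J W i k ≤ udX g J W i :=
  Finset.le_sup' (partialSum J W i) (Finset.mem_range.mpr (Nat.lt_succ_of_le hk))

lemma udX_nonneg (i : Fin (g + 1)) : 0 ≤ udX g J W i :=
  partialSum_zero J W i ▸ partialSum_le_udX J W i g.zero_le

lemma udX_le_of_pos (i : Fin (g + 1)) (hpos : 0 < udX g J W i) :
    udX g J W i ≤ (J (i - 1) - W (i - 1)) + udX g J W (i - 1) := by
  obtain ⟨k, hk, hXk⟩ := Finset.exists_mem_eq_sup' ⟨0, Finset.mem_range.mpr g.succ_pos⟩
    (partialSum J W i)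
  rw [← udX_eq_sup'] at hXk
  obtain _ | m := k
  · rw [hXk, partialSum_zero] at hpos
    exact (lt_irrefl 0 hpos).elim
  · have hm : m ≤ g := by rw [Finset.mem_range] at hk; omega
    rw [hXk, partialSum_succ]
    linarith [partialSum_le_udX J W (i - 1) hm]

lemma udJbar_le (i : Fin (g + 1)) : udJbar g J W i ≤ W i := min_le_left _ _

lemma min_le_udJbar (i : Fin (g + 1)) : min (J i) (W i) ≤ udJbar g J W i :=
  le_min (min_le_right _ _) (by linarith [min_le_left (J i) (W i), udX_nonneg J W i])

lemma le_udWbar (i : Fin (g + 1)) : J (i + 1) ≤ udWbar g J W i := by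
  rw [udWbar]
  linarith [udJbar_le J W i]

lemma udWbar_sub_one_of_udX_pos (i : Fin (g + 1)) (hpos : 0 < udX g J W i) :
    udWbar g J W (i - 1) = J i := by
  have hJbar : udJbar g J W (i - 1) = W (i - 1) :=
    min_eq_left (by linarith [udX_le_of_pos J W i hpos])
  rw [udWbar, hJbar, sub_add_cancel]
  ring

lemma min_le_min_udJbar_udWbar (i : Fin (g + 1)) :
    min (min (J i) (W i)) (min (J (i + 1)) (W (i + 1))) ≤
      min (udJbar g J W i) (udWbar g J W i) :=
  le_min ((min_le_left _ _).trans (min_le_udJbar J W i))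
    ((min_le_right _ _).trans ((min_le_left _ _).trans (le_udWbar J W i)))

lemma exists_min_udJbar_udWbar_le (j : Fin (g + 1)) :
    ∃ i, min (udJbar g J W i) (udWbar g J W i) ≤ min (J j) (W j) := by
  rcases le_total (W j) (J j) with hWJ | hJW
  · refine ⟨j, ?_⟩
    rw [min_eq_right hWJ]
    exact (min_le_left _ _).trans (udJbar_le J W j)
  rw [min_eq_left hJW]
  rcases (udX_nonneg J W j).eq_or_lt with hzero | hpos
  · refine ⟨j, (min_le_left _ _).trans ((min_le_right _ _).trans ?_)⟩
    rw [← hzero, zero_add]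
  · exact ⟨j - 1, (min_le_right _ _).trans (udWbar_sub_one_of_udX_pos J W j hpos).le⟩

end UDToda

open UDToda in
theorem udpToda_Cg_conserved_general (g : ℕ) (J W : Fin (g + 1) → ℝ) :
    Finset.univ.inf' Finset.univ_nonempty
        (fun i => min (udJbar g J W i) (udWbar g J W i)) =
      Finset.univ.inf' Finset.univ_nonempty (fun i => min (J i) (W i)) := by
  apply le_antisymm
  · refine Finset.le_inf' _ _ fun j _ => ?_
    obtain ⟨i, hi⟩ := exists_min_udJbar_udWbar_le J W j
    exact (Finset.inf'_le _ (Finset.mem_univ i)).trans hi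
  · refine Finset.le_inf' _ _ fun i _ => ?_
    exact (le_min (Finset.inf'_le _ (Finset.mem_univ i))
      (Finset.inf'_le _ (Finset.mem_univ (i + 1)))).trans (min_le_min_udJbar_udWbar J W i)

/-- `C_g = min_{1 ≤ i ≤ g+1} min(J_i, W_i)` is a conserved quantity of the UD-pTL. -/
theorem udpToda_Cg_conserved (g : ℕ) (hg : 1 ≤ g) (J W : Fin (g + 1) → ℝ)
    (h : ∑ i, J i < ∑ i, W i) :
    Finset.univ.inf' Finset.univ_nonempty
        (fun i => min (udJbar g J W i) (udWbar g J W i)) =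
      Finset.univ.inf' Finset.univ_nonempty (fun i => min (J i) (W i)) :=
  udpToda_Cg_conserved_general g J W
end

section
/- The periodic box-ball system is well defined: if all J_1,…,J_{g+1}, W_1,…,W_{g+1} are positive integers and Σ_{i=1}^{g+1} J_i < Σ_{i=1}^{g+1} W_i, then all J̄_1,…,J̄_{g+1}, W̄_1,…,W̄_{g+1} are again positive integers. -/
/-! The carry `X_i` is a maximum over partial sums that includes the empty sum, so it is
nonnegative, and it is an integer when all `J_i`, `W_i` are. Hence
`J̄_i = min(W_i, X_i + J_i) ≥ min(W_i, J_i) > 0`, and `J̄_i ≤ W_i` gives `W̄_i ≥ J_{i+1} > 0`. -/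

open Fin.NatCast

section

variable {g : ℕ} {J W : Fin (g + 1) → ℝ}

theorem udX_nonneg (i : Fin (g + 1)) : 0 ≤ udX g J W i :=
  Finset.le_sup'_of_le _ (Finset.mem_range.mpr g.succ_pos) (by simp)

theorem udJbar_pos {i : Fin (g + 1)} (hJ : 0 < J i) (hW : 0 < W i) : 0 < udJbar g J W i :=
  lt_min hW (add_pos_of_nonneg_of_pos (udX_nonneg i) hJ)

theorem le_udWbar (i : Fin (g + 1)) : J (i + 1) ≤ udWbar g J W i := by
  have : udJbar g J W i ≤ W i := min_le_left _ _
  rw [udWbar]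
  linarith

variable (hJ : ∀ i, ∃ n : ℤ, J i = n) (hW : ∀ i, ∃ n : ℤ, W i = n)
include hJ hW

theorem exists_int_eq_udX (i : Fin (g + 1)) : ∃ n : ℤ, udX g J W i = n := by
  choose j hj using hJ
  choose w hw using hW
  refine Finset.sup'_mem {x : ℝ | ∃ n : ℤ, x = n} ?_ _ _ _ fun k _ =>
    ⟨∑ l ∈ Finset.Icc 1 k, (j (i - l) - w (i - l)), by simp [hj, hw]⟩
  rintro _ ⟨a, rfl⟩ _ ⟨b, rfl⟩
  exact ⟨max a b, by push_cast; rfl⟩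

theorem exists_int_eq_udJbar (i : Fin (g + 1)) : ∃ n : ℤ, udJbar g J W i = n := by
  obtain ⟨x, hx⟩ := exists_int_eq_udX hJ hW i
  obtain ⟨j, hj⟩ := hJ i
  obtain ⟨w, hw⟩ := hW i
  exact ⟨min w (x + j), by rw [udJbar, hx, hj, hw]; push_cast; rfl⟩

theorem exists_int_eq_udWbar (i : Fin (g + 1)) : ∃ n : ℤ, udWbar g J W i = n := by
  obtain ⟨b, hb⟩ := exists_int_eq_udJbar hJ hW i
  obtain ⟨j, hj⟩ := hJ (i + 1)
  obtain ⟨w, hw⟩ := hW i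
  exact ⟨j + w - b, by rw [udWbar, hb, hj, hw]; push_cast; rfl⟩

end

theorem exists_pos_int_of_pos {x : ℝ} (hx : 0 < x) (h : ∃ n : ℤ, x = n) :
    ∃ n : ℤ, 0 < n ∧ x = n := by
  obtain ⟨n, rfl⟩ := h
  exact ⟨n, Int.cast_pos.mp hx, rfl⟩

theorem pBBS_well_defined_general (g : ℕ) (J W : Fin (g + 1) → ℝ)
    (hJ : ∀ i, ∃ n : ℤ, 0 < n ∧ J i = n) (hW : ∀ i, ∃ n : ℤ, 0 < n ∧ W i = n) :
    (∀ i, ∃ n : ℤ, 0 < n ∧ udJbar g J W i = n) ∧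
    (∀ i, ∃ n : ℤ, 0 < n ∧ udWbar g J W i = n) := by
  have hJint i : ∃ n : ℤ, J i = n := (hJ i).imp fun _ => And.right
  have hWint i : ∃ n : ℤ, W i = n := (hW i).imp fun _ => And.right
  have hJpos i : 0 < J i := by
    obtain ⟨n, hn, hJn⟩ := hJ i
    exact hJn ▸ Int.cast_pos.mpr hn
  have hWpos i : 0 < W i := by
    obtain ⟨n, hn, hWn⟩ := hW i
    exact hWn ▸ Int.cast_pos.mpr hn
  exact ⟨fun i => exists_pos_int_of_pos (udJbar_pos (hJpos i) (hWpos i))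
      (exists_int_eq_udJbar hJint hWint i),
    fun i => exists_pos_int_of_pos ((hJpos (i + 1)).trans_le (le_udWbar i))
      (exists_int_eq_udWbar hJint hWint i)⟩

/-- The periodic box-ball system is well defined: if all `J_i`, `W_i` are
positive integers, then so are all `J̄_i`, `W̄_i`. -/
theorem pBBS_well_defined (g : ℕ) (hg : 1 ≤ g) (J W : Fin (g + 1) → ℝ)
    (hJ : ∀ i, ∃ n : ℤ, 0 < n ∧ J i = n) (hW : ∀ i, ∃ n : ℤ, 0 < n ∧ W i = n)
    (h : ∑ i, J i < ∑ i, W i) :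
    (∀ i, ∃ n : ℤ, 0 < n ∧ udJbar g J W i = n) ∧
    (∀ i, ∃ n : ℤ, 0 < n ∧ udWbar g J W i = n) :=
  pBBS_well_defined_general g J W hJ hW
end

section
/- Let s be a finite nonempty index set, and for each i ∈ s let a_i ∈ ℝ² and b_i ∈ ℝ. Define F : ℝ² → ℝ by F(p) = min_{i∈s} (⟨a_i, p⟩ + b_i). Then F is differentiable at a point p ∈ ℝ² if and only if all indices attaining the minimum at p have the same linear part; i.e., if and only if a_i = a_j whenever i, j ∈ s satisfy ⟨a_i,p⟩ + b_i = F(p) = ⟨a_j,p⟩ + b_j. -/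
/-!
Near `p` only the affine pieces `f_i` attaining the minimum matter, since the others stay strictly
larger by continuity. If all of them share the linear part, they share the constant too, so `F`
agrees near `p` with a single affine function. Conversely, if `F` is differentiable at `p` and `f_k`
attains the minimum there, then `f_k - F ≥ 0` has a minimum at `p`, which forces `DF(p) = Df_k`;
so all active pieces have the same linear part.
-/

open Filter Topology

theorem HasFDerivAt.eq_of_eventuallyLE_of_eq {E : Type*} [NormedAddCommGroup E] [NormedSpace ℝ E]
    {f g : E → ℝ} {f' g' : E →L[ℝ] ℝ} {p : E} (hf : HasFDerivAt f f' p)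
    (hg : HasFDerivAt g g' p) (hle : f ≤ᶠ[𝓝 p] g) (heq : f p = g p) : f' = g' := by
  have hmin : IsLocalMin (fun q => g q - f q) p := by
    filter_upwards [hle] with q hq
    rw [heq, sub_self]
    exact sub_nonneg.mpr hq
  exact (sub_eq_zero.mp (hmin.hasFDerivAt_eq_zero (hg.sub hf))).symm

theorem Finset.inf'_eventuallyEq_of_isMinOn {ι X α : Type*} [TopologicalSpace X] [LinearOrder α]
    [TopologicalSpace α] [OrderClosedTopology α] {s : Finset ι} (hs : s.Nonempty)
    {f : ι → X → α} {p : X} (hf : ∀ i ∈ s, ContinuousAt (f i) p) {i₀ : ι} (hi₀ : i₀ ∈ s)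
    (hmin : ∀ i ∈ s, f i₀ p ≤ f i p) (hactive : ∀ i ∈ s, f i p = f i₀ p → f i₀ ≤ᶠ[𝓝 p] f i) :
    (fun q => s.inf' hs fun i => f i q) =ᶠ[𝓝 p] f i₀ := by
  have hle : ∀ i ∈ s, f i₀ ≤ᶠ[𝓝 p] f i := by
    intro i hi
    rcases (hmin i hi).eq_or_lt with heq | hlt
    · exact hactive i hi heq.symm
    · exact ((hf i₀ hi₀).eventually_lt (hf i hi) hlt).mono fun q hq => hq.le
  filter_upwards [(eventually_all_finset s).2 hle] with q hq
  exact le_antisymm (Finset.inf'_le _ hi₀) (Finset.le_inf' _ _ hq)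

theorem differentiableAt_inf'_affine_iff {ι E : Type*} [NormedAddCommGroup E] [NormedSpace ℝ E]
    (s : Finset ι) (hs : s.Nonempty) (ℓ : ι → E →L[ℝ] ℝ)
    (b : ι → ℝ) (p : E) :
    DifferentiableAt ℝ (fun q => s.inf' hs fun i => ℓ i q + b i) p ↔
      ∀ i ∈ s, ∀ j ∈ s,
        ℓ i p + b i = (s.inf' hs fun k => ℓ k p + b k) →
        ℓ j p + b j = (s.inf' hs fun k => ℓ k p + b k) → ℓ i = ℓ j := by
  set F : E → ℝ := fun q => s.inf' hs fun i => ℓ i q + b i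
  have hasFDerivAt_affine (k : ι) : HasFDerivAt (fun q => ℓ k q + b k) (ℓ k) p :=
    (ℓ k).hasFDerivAt.add_const (b k)
  constructor
  · intro hF i hi j hj hiF hjF
    have fderiv_eq (k : ι) (hk : k ∈ s) (hkF : ℓ k p + b k = F p) : fderiv ℝ F p = ℓ k :=
      hF.hasFDerivAt.eq_of_eventuallyLE_of_eq (hasFDerivAt_affine k)
        (Eventually.of_forall fun q => Finset.inf'_le _ hk) hkF.symm
    rw [← fderiv_eq i hi hiF, fderiv_eq j hj hjF]
  · intro hactive
    obtain ⟨i₀, hi₀, hi₀F⟩ := Finset.exists_mem_eq_inf' hs fun i => ℓ i p + b i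
    have hF : F =ᶠ[𝓝 p] fun q => ℓ i₀ q + b i₀ := by
      refine Finset.inf'_eventuallyEq_of_isMinOn hs
        (fun i _ => (hasFDerivAt_affine i).continuousAt) hi₀
        (fun i hi => hi₀F ▸ Finset.inf'_le _ hi) fun i hi hii₀ => ?_
      have hℓ : ℓ i = ℓ i₀ := hactive i hi i₀ hi₀ (hii₀.trans hi₀F.symm) hi₀F.symm
      have hb : b i = b i₀ := by rw [hℓ] at hii₀; exact add_left_cancel hii₀
      exact Eventually.of_forall fun q => by simp only [hℓ, hb, le_refl]
    exact (hasFDerivAt_affine i₀).differentiableAt.congr_of_eventuallyEq hF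

/-- A min-plus (tropical) affine function `F(p) = min_{i ∈ s} (⟨a_i, p⟩ + b_i)`
on `ℝ²` is differentiable at `p` if and only if all indices attaining the
minimum at `p` have the same linear part `a_i`. -/
theorem minplus_differentiableAt_iff {ι : Type*} (s : Finset ι) (hs : s.Nonempty)
    (a : ι → EuclideanSpace ℝ (Fin 2)) (b : ι → ℝ) (p : EuclideanSpace ℝ (Fin 2)) :
    DifferentiableAt ℝ
        (fun q : EuclideanSpace ℝ (Fin 2) =>
          s.inf' hs fun i => (inner ℝ (a i) q : ℝ) + b i) p ↔
      ∀ i ∈ s, ∀ j ∈ s,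
        (inner ℝ (a i) p : ℝ) + b i = (s.inf' hs fun k => (inner ℝ (a k) p : ℝ) + b k) →
        (inner ℝ (a j) p : ℝ) + b j = (s.inf' hs fun k => (inner ℝ (a k) p : ℝ) + b k) →
        a i = a j := by
  simpa only [innerSL_apply_apply, innerSL_inj] using
    differentiableAt_inf'_affine_iff s hs (fun i => innerSL ℝ (a i)) b p
end
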